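/- Let p be a prime, s ≥ 1, n ≥ 1, F_q a finite field of characteristic p, γ ∈ F_q nonzero with x^n + γ irreducible over F_q, and let k, τ, i be integers with 1 ≤ k ≤ s-1, 1 ≤ τ ≤ p-1, and p^s - p^{s-k} + (τ-1)p^{s-k-1} + 1 ≤ i ≤ p^s - p^{s-k} + τ p^{s-k-1}. Then the minimum Hamming distance of the ideal C = ⟨(x^n + γ)^i⟩ in F_q[x]/⟨(x^n + γ)^{p^s}⟩ equals (τ+1)p^k. -/

import Mathlib

/-!
Write `P = X ^ n + γ = expand n (X + γ)`. A nonzero multiple `f` of `P ^ i` of degree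
`< n p ^ s` has a nonzero polyphase component `g` (where `f = ∑ r < n, g_r(X ^ n) X ^ r`) that is
a multiple of `(X + γ) ^ i` of degree `< p ^ s` with no more nonzero coefficients than `f`.

If `α ≠ 0` is a root of multiplicity `t` of `g ≠ 0`, then `g` has at least `∏ (tⱼ + 1)` nonzero
coefficients, the `tⱼ` being the base-`p` digits of `t`. By induction on `t`: split
`g = ∑ c < p, g_c(X ^ p) X ^ c` and let `μ` be the least multiplicity of `α ^ p` among the `g_c`.
The operator `X d/dX - c` annihilates `h(X ^ p) X ^ c`, rescales the other components by nonzero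
constants and lowers the multiplicity at `α` by at most one; applying it once for each component
of multiplicity exactly `μ` shows that there are more than `t - p μ` of them. Hence `t / p = μ`,
at least `t % p + 1` components have multiplicity `t / p`, and their weights add up.

For `i ≤ t < p ^ s` the digit product is at least `(τ + 1) p ^ k`, and this weight is attained by
`P ^ (τ p ^ (s-k-1) + (p ^ k - 1) p ^ (s-k))`, which by Frobenius is the product of a `τ`-th power
and a `(p ^ k - 1)`-th power of binomials.
-/

open Polynomial Finset

def digitWeight (p t : ℕ) : ℕ := ((Nat.digits p t).map (· + 1)).prod

section DigitWeight
variable {p : ℕ}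

@[simp] lemma digitWeight_zero (p : ℕ) : digitWeight p 0 = 1 := by simp [digitWeight]

lemma digitWeight_eq_mod_add_one_mul (hp : 1 < p) (t : ℕ) :
    digitWeight p t = (t % p + 1) * digitWeight p (t / p) := by
  rcases Nat.eq_zero_or_pos t with rfl | ht
  · simp
  · simp [digitWeight, Nat.digits_def' hp ht]

lemma digitWeight_pos (p t : ℕ) : 0 < digitWeight p t :=
  List.prod_pos (by simp)

lemma two_le_digitWeight {t : ℕ} (ht : t ≠ 0) : 2 ≤ digitWeight p t := by
  have hlast := Nat.getLast_digit_ne_zero p ht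
  calc 2 ≤ (Nat.digits p t).getLast (Nat.digits_ne_nil_iff_ne_zero.2 ht) + 1 := by omega
    _ ≤ digitWeight p t :=
      List.single_le_prod (by simp) _ (List.mem_map_of_mem (List.getLast_mem _))

lemma digitWeight_of_lt (hp : 1 < p) {a : ℕ} (ha : a < p) : digitWeight p a = a + 1 := by
  rw [digitWeight_eq_mod_add_one_mul hp, Nat.mod_eq_of_lt ha, Nat.div_eq_of_lt ha,
    digitWeight_zero, mul_one]

lemma digitWeight_add_mul_pow (hp : 1 < p) {m a : ℕ} (ha : a < p ^ m) (b : ℕ) :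
    digitWeight p (a + b * p ^ m) = digitWeight p a * digitWeight p b := by
  induction m generalizing a with
  | zero => simp_all
  | succ m ih =>
    have hdiv : (a + b * p ^ (m + 1)) / p = a / p + b * p ^ m := by
      rw [pow_succ, ← mul_assoc, Nat.add_mul_div_right _ _ (by omega)]
    have hmod : (a + b * p ^ (m + 1)) % p = a % p := by
      rw [pow_succ, ← mul_assoc, Nat.add_mul_mod_self_right]
    have ha' : a / p < p ^ m := Nat.div_lt_of_lt_mul (by rwa [← pow_succ'])
    rw [digitWeight_eq_mod_add_one_mul hp, digitWeight_eq_mod_add_one_mul hp a, hdiv, hmod,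
      ih ha', mul_assoc]

lemma digitWeight_pow_sub_one (hp : 1 < p) (k : ℕ) : digitWeight p (p ^ k - 1) = p ^ k := by
  induction k with
  | zero => simp
  | succ k ih =>
    have hpk : 1 ≤ p ^ k := Nat.one_le_pow _ _ (by omega)
    have hsplit : p ^ (k + 1) - 1 = (p - 1) + (p ^ k - 1) * p ^ 1 := by
      rw [pow_one, pow_succ, Nat.sub_mul, one_mul]
      have : p ≤ p ^ k * p := Nat.le_mul_of_pos_left p hpk
      omega
    rw [hsplit, digitWeight_add_mul_pow hp (by rw [pow_one]; omega), ih,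
      digitWeight_of_lt hp (by omega), Nat.sub_add_cancel hp.le, pow_succ, mul_comm]

lemma add_two_le_digitWeight (hp : 1 < p) {c m t : ℕ} (hc : c * p ^ m < t)
    (ht : t < p ^ (m + 1)) : c + 2 ≤ digitWeight p t := by
  have hpm : 0 < p ^ m := by positivity
  have hdigit : t / p ^ m < p := Nat.div_lt_of_lt_mul (by rwa [← pow_succ])
  have hc_le : c ≤ t / p ^ m := (Nat.le_div_iff_mul_le hpm).2 hc.le
  have hsplit : digitWeight p t = digitWeight p (t % p ^ m) * (t / p ^ m + 1) := by
    conv_lhs => rw [← Nat.mod_add_div' t (p ^ m)]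
    rw [digitWeight_add_mul_pow hp (Nat.mod_lt _ hpm), digitWeight_of_lt hp hdigit]
  rw [hsplit]
  rcases hc_le.lt_or_eq with hlt | heq
  · nlinarith [digitWeight_pos p (t % p ^ m)]
  · have hrem : t % p ^ m ≠ 0 := by
      intro h
      have := Nat.mod_add_div' t (p ^ m)
      rw [← heq] at this
      omega
    nlinarith [two_le_digitWeight (p := p) hrem]

lemma mul_pow_le_digitWeight (hp : 1 < p) {c k m t : ℕ}
    (hlo : (p ^ k - 1) * p ^ (m + 1) + c * p ^ m < t) (hhi : t < p ^ (k + m + 1)) :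
    (c + 2) * p ^ k ≤ digitWeight p t := by
  have hM : 0 < p ^ (m + 1) := by positivity
  have hhi' : t < (p ^ k - 1 + 1) * p ^ (m + 1) := by
    rwa [Nat.sub_add_cancel (Nat.one_le_pow _ _ (by omega)), ← pow_add, ← add_assoc]
  have hdiv : t / p ^ (m + 1) = p ^ k - 1 := Nat.div_eq_of_lt_le (by omega) hhi'
  have hsplit : digitWeight p t = digitWeight p (t % p ^ (m + 1)) * p ^ k := by
    rw [← digitWeight_pow_sub_one hp k, ← hdiv,
      ← digitWeight_add_mul_pow hp (Nat.mod_lt _ hM), Nat.mod_add_div']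
  have hrem : c * p ^ m < t % p ^ (m + 1) := by
    have := Nat.mod_add_div' t (p ^ (m + 1))
    rw [hdiv] at this
    omega
  rw [hsplit]
  exact Nat.mul_le_mul_right _ (add_two_le_digitWeight hp hrem (Nat.mod_lt _ hM))

end DigitWeight

lemma Nat.mul_pow_add_mul_pow_succ_lt {p τ k m : ℕ} (hτ : τ < p) :
    τ * p ^ m + (p ^ k - 1) * p ^ (m + 1) < p ^ (k + m + 1) := by
  have hlow : τ * p ^ m < p ^ (m + 1) := by
    rw [pow_succ, mul_comm _ p]
    exact Nat.mul_lt_mul_of_pos_right hτ (pow_pos (by omega) m)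
  have hsum : (p ^ k - 1) * p ^ (m + 1) + p ^ (m + 1) = p ^ (k + m + 1) := by
    rw [← Nat.succ_mul, Nat.succ_eq_add_one, Nat.sub_add_cancel (Nat.one_le_pow _ _ (by omega)),
      ← pow_add, add_assoc]
  omega

lemma Ideal.Quotient.mk_mem_span_singleton_mk_iff {R : Type*} [CommRing R] {a b f : R}
    (hba : b ∣ a) :
    Ideal.Quotient.mk (Ideal.span {a}) f ∈ Ideal.span {Ideal.Quotient.mk (Ideal.span {a}) b} ↔
      b ∣ f := by
  rw [← Set.image_singleton, ← Ideal.map_span,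
    Ideal.mem_quotient_iff_mem (Ideal.span_singleton_le_span_singleton.2 hba),
    Ideal.mem_span_singleton]

namespace Polynomial

section Polyphase
variable {R : Type*} [CommSemiring R] {n r : ℕ}

lemma card_support_expand (hn : n ≠ 0) (f : R[X]) : #(expand R n f).support = #f.support := by
  have hsupp : (expand R n f).support = f.support.image (· * n) := by
    ext m
    simp only [mem_support_iff, coeff_expand (Nat.pos_of_ne_zero hn), mem_image]
    constructor
    · intro h
      split_ifs at h with hdvd
      · exact ⟨m / n, h, Nat.div_mul_cancel hdvd⟩
      · exact absurd rfl h
    · rintro ⟨k, hk, rfl⟩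
      rwa [if_pos (dvd_mul_left n k), Nat.mul_div_cancel _ (Nat.pos_of_ne_zero hn)]
  rw [hsupp, card_image_of_injective _ (mul_left_injective₀ hn)]

lemma coeff_iterate_divX (f : R[X]) (r k : ℕ) : (divX^[r] f).coeff k = f.coeff (k + r) := by
  induction r generalizing k with
  | zero => rfl
  | succ r ih => rw [Function.iterate_succ_apply', coeff_divX, ih, add_right_comm, add_assoc]

noncomputable def polyphase (n r : ℕ) (f : R[X]) : R[X] := contract n (divX^[r] f)

lemma coeff_polyphase (hn : n ≠ 0) (f : R[X]) (k : ℕ) :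
    (polyphase n r f).coeff k = f.coeff (k * n + r) := by
  rw [polyphase, coeff_contract hn, coeff_iterate_divX]

lemma coeff_sum_expand_mul_X_pow (a : ℕ → R[X]) (hr : r < n) (k : ℕ) :
    (∑ r' ∈ range n, expand R n (a r') * X ^ r').coeff (k * n + r) = (a r).coeff k := by
  have hn : 0 < n := by omega
  rw [finsetSum_coeff, sum_eq_single r]
  · rw [coeff_mul_X_pow, coeff_expand hn, if_pos (dvd_mul_left n k), Nat.mul_div_cancel _ hn]
  · intro r' hr' hne
    rw [coeff_mul_X_pow', coeff_expand hn]
    split_ifs with hle hdvd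
    · have hmod := (Nat.modEq_iff_dvd' hle).2 hdvd
      rw [Nat.ModEq, add_comm, Nat.add_mul_mod_self_right, Nat.mod_eq_of_lt hr,
        Nat.mod_eq_of_lt (mem_range.1 hr')] at hmod
      exact absurd hmod hne
    · rfl
    · rfl
  · exact fun h => absurd (mem_range.2 hr) h

lemma sum_expand_polyphase_mul_X_pow (hn : n ≠ 0) (f : R[X]) :
    ∑ r ∈ range n, expand R n (polyphase n r f) * X ^ r = f := by
  ext m
  rw [← Nat.div_add_mod' m n, coeff_sum_expand_mul_X_pow _ (Nat.mod_lt _ (Nat.pos_of_ne_zero hn)),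
    coeff_polyphase hn]

lemma polyphase_sum_expand_mul_X_pow (a : ℕ → R[X]) (hr : r < n) :
    polyphase n r (∑ r' ∈ range n, expand R n (a r') * X ^ r') = a r := by
  ext k
  rw [coeff_polyphase (by omega), coeff_sum_expand_mul_X_pow a hr]

lemma polyphase_expand_mul (hr : r < n) (g f : R[X]) :
    polyphase n r (expand R n g * f) = g * polyphase n r f := by
  conv_lhs => rw [← sum_expand_polyphase_mul_X_pow (n := n) (by omega) f, mul_sum]
  simp_rw [← mul_assoc, ← map_mul]
  exact polyphase_sum_expand_mul_X_pow _ hr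

lemma exists_polyphase_ne_zero (hn : n ≠ 0) {f : R[X]} (hf : f ≠ 0) :
    ∃ r < n, polyphase n r f ≠ 0 := by
  by_contra! h
  refine hf ?_
  rw [← sum_expand_polyphase_mul_X_pow hn f]
  exact sum_eq_zero fun r hr => by rw [h r (mem_range.1 hr), map_zero, zero_mul]

lemma mul_natDegree_polyphase_le (hn : n ≠ 0) (f : R[X]) :
    n * (polyphase n r f).natDegree ≤ f.natDegree := by
  rcases eq_or_ne (polyphase n r f) 0 with h | h
  · simp [h]
  · have := le_natDegree_of_ne_zero (p := f) (n := (polyphase n r f).natDegree * n + r)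
      (by rw [← coeff_polyphase hn]; exact leadingCoeff_ne_zero.2 h)
    rw [mul_comm]
    omega

lemma sum_card_support_polyphase_le (hn : n ≠ 0) (f : R[X]) :
    ∑ r ∈ range n, #(polyphase n r f).support ≤ #f.support := by
  rw [← card_sigma]
  refine card_le_card_of_injOn (fun x => x.2 * n + x.1) (fun x hx => ?_) ?_
  · rw [mem_coe, mem_sigma, mem_support_iff, coeff_polyphase hn] at hx
    exact mem_support_iff.2 hx.2
  · rintro ⟨r₁, k₁⟩ hx₁ ⟨r₂, k₂⟩ hx₂ h
    simp only [mem_coe, mem_sigma, mem_range] at hx₁ hx₂ h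
    have hr : r₁ = r₂ := by
      simpa [add_comm, Nat.add_mul_mod_self_right, Nat.mod_eq_of_lt hx₁.1,
        Nat.mod_eq_of_lt hx₂.1] using congrArg (· % n) h
    subst hr
    have hk : k₁ = k₂ := (mul_left_inj' hn).1 (by omega)
    subst hk
    rfl

end Polyphase

section CharP
variable {p : ℕ} {R : Type*} [CommRing R] [CharP R p]

lemma expand_X_sub_C_pow (hp : p.Prime) (α : R) (m : ℕ) :
    expand R p ((X - C (α ^ p)) ^ m) = (X - C α) ^ (p * m) := by
  have : Fact p.Prime := ⟨hp⟩
  rw [map_pow, map_sub, expand_X, expand_C, pow_mul, C_pow, sub_pow_char (p := p)]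

lemma X_mul_derivative_expand_mul_X_pow_sub (u : R[X]) (c : ℕ) (a : R) :
    X * derivative (expand R p u * X ^ c) - C a * (expand R p u * X ^ c) =
      expand R p (C ((c : R) - a) * u) * X ^ c := by
  have hX : X * derivative (X ^ c : R[X]) = C (c : R) * X ^ c := by
    cases c with
    | zero => simp
    | succ c => rw [derivative_X_pow, Nat.add_sub_cancel, pow_succ]; ring
  have hexp : derivative (expand R p u) = 0 := by
    rw [derivative_expand, CharP.cast_eq_zero R[X] p, zero_mul, mul_zero]
  rw [derivative_mul, hexp, zero_mul, zero_add, map_mul, expand_C, C_sub]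
  linear_combination expand R p u * hX

lemma X_sub_C_pow_dvd_of_dvd_polyphase (hp : p.Prime) {α : R} {v : R[X]} {μ : ℕ}
    (h : ∀ c < p, (X - C (α ^ p)) ^ μ ∣ polyphase p c v) : (X - C α) ^ (p * μ) ∣ v := by
  rw [← sum_expand_polyphase_mul_X_pow hp.ne_zero v]
  refine dvd_sum fun c hc => dvd_mul_of_dvd_left ?_ _
  rw [← expand_X_sub_C_pow hp]
  exact _root_.map_dvd (expand R p) (h c (mem_range.1 hc))

variable {F : Type*} [Field F] [CharP F p]

theorem not_X_sub_C_pow_dvd_sum_expand_mul_X_pow {α : F} (hα : α ≠ 0)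
    {S T : Finset ℕ} (hS : ∀ c ∈ S, c < p) (hTS : T ⊆ S) (hT : T.Nonempty) {u : ℕ → F[X]}
    (hu : ∀ c ∈ S, (u c).IsRoot (α ^ p) ↔ c ∉ T) :
    ¬ (X - C α) ^ #T ∣ ∑ c ∈ S, expand F p (u c) * X ^ c := by
  obtain ⟨N, hN⟩ : ∃ N, #T = N + 1 := ⟨#T - 1, by have := hT.card_pos; omega⟩
  induction N generalizing T u with
  | zero =>
    obtain ⟨c₀, rfl⟩ := card_eq_one.1 hN
    have hc₀ : c₀ ∈ S := hTS (mem_singleton_self c₀)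
    rw [hN, pow_one, dvd_iff_isRoot, IsRoot, eval_finsetSum,
      sum_eq_single c₀ (fun c hc hne => ?_) (fun h => absurd hc₀ h)]
    · rw [eval_mul, expand_eval, eval_pow, eval_X]
      exact mul_ne_zero (by simpa using (hu c₀ hc₀).not) (pow_ne_zero _ hα)
    · rw [eval_mul, expand_eval, (hu c hc).2 (by simpa using hne), zero_mul]
  | succ N ih =>
    obtain ⟨c₀, hc₀⟩ := hT
    intro hdvd
    have hcast : ∀ c ∈ S, (c : F) = c₀ ↔ c = c₀ := fun c hc => by
      rw [CharP.natCast_eq_natCast F p, Nat.ModEq, Nat.mod_eq_of_lt (hS c hc),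
        Nat.mod_eq_of_lt (hS c₀ (hTS hc₀))]
    refine ih (T := T.erase c₀) (u := fun c => C ((c : F) - c₀) * u c)
      ((erase_subset _ _).trans hTS) ?_ (fun c hc => ?_) (by rw [card_erase_of_mem hc₀, hN]; rfl)
      ?_
    · rw [← card_pos, card_erase_of_mem hc₀, hN]
      omega
    · simp only [IsRoot, eval_mul, eval_C, mul_eq_zero, sub_eq_zero, hcast c hc, mem_erase]
      have := hu c hc
      simp only [IsRoot] at this
      tauto
    · set f := ∑ c ∈ S, expand F p (u c) * X ^ c
      have hL : (X - C α) ^ (N + 1) ∣ X * derivative f - C (c₀ : F) * f := by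
        rw [hN] at hdvd
        exact dvd_sub ((pow_sub_one_dvd_derivative_of_pow_dvd hdvd).mul_left X)
          ((dvd_trans (pow_dvd_pow _ (by omega)) hdvd).mul_left _)
      rw [card_erase_of_mem hc₀, hN, Nat.add_sub_cancel]
      simpa only [f, derivative_sum, mul_sum, ← sum_sub_distrib,
        X_mul_derivative_expand_mul_X_pow_sub] using hL

lemma rootMultiplicity_lt_of_dvd_polyphase (hp : p.Prime) {α : F} (hα : α ≠ 0) {v : F[X]}
    {μ : ℕ} (h : ∀ c < p, (X - C (α ^ p)) ^ μ ∣ polyphase p c v) {T : Finset ℕ}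
    (hT_mem : ∀ c, c ∈ T ↔ c < p ∧ ¬ (X - C (α ^ p)) ^ (μ + 1) ∣ polyphase p c v)
    (hT : T.Nonempty) : rootMultiplicity α v < p * μ + #T := by
  set β := α ^ p
  set w : ℕ → F[X] := fun c => polyphase p c v /ₘ (X - C β) ^ μ
  have hw : ∀ c < p, polyphase p c v = (X - C β) ^ μ * w c := fun c hc => by
    obtain ⟨q, hq⟩ := h c hc
    simp only [w, hq, mul_divByMonic_cancel_left _ ((monic_X_sub_C β).pow μ)]
  have hv_eq : v = (X - C α) ^ (p * μ) * ∑ c ∈ range p, expand F p (w c) * X ^ c := by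
    conv_lhs => rw [← sum_expand_polyphase_mul_X_pow hp.ne_zero v]
    rw [mul_sum]
    refine sum_congr rfl fun c hc => ?_
    rw [hw c (mem_range.1 hc), map_mul, expand_X_sub_C_pow hp, mul_assoc]
  have hroot : ∀ c ∈ range p, (w c).IsRoot β ↔ c ∉ T := by
    intro c hc
    rw [hT_mem, not_and_not_right, imp_iff_right (mem_range.1 hc), hw c (mem_range.1 hc),
      pow_succ, mul_dvd_mul_iff_left (pow_ne_zero _ (X_sub_C_ne_zero β)), dvd_iff_isRoot]
  by_contra! hle
  have hdvd := (pow_dvd_pow _ hle).trans (pow_rootMultiplicity_dvd v α)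
  rw [hv_eq, pow_add, mul_dvd_mul_iff_left (pow_ne_zero _ (X_sub_C_ne_zero α))] at hdvd
  exact not_X_sub_C_pow_dvd_sum_expand_mul_X_pow hα (fun c hc => mem_range.1 hc)
    (fun c hc => mem_range.2 ((hT_mem c).1 hc).1) hT hroot hdvd

lemma exists_rootMultiplicity_polyphase_eq_div (hp : p.Prime) {α : F} (hα : α ≠ 0) {v : F[X]}
    (hv : v ≠ 0) :
    ∃ T ⊆ range p, rootMultiplicity α v % p < #T ∧ ∀ c ∈ T,
      polyphase p c v ≠ 0 ∧
        rootMultiplicity (α ^ p) (polyphase p c v) = rootMultiplicity α v / p := by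
  classical
  set β := α ^ p
  set S := (range p).filter fun c => polyphase p c v ≠ 0
  have hS : S.Nonempty := by
    obtain ⟨r, hr, hr0⟩ := exists_polyphase_ne_zero hp.ne_zero hv
    exact ⟨r, mem_filter.2 ⟨mem_range.2 hr, hr0⟩⟩
  set μ := S.inf' hS fun c => rootMultiplicity β (polyphase p c v)
  have hdvd : ∀ c < p, (X - C β) ^ μ ∣ polyphase p c v := by
    intro c hc
    by_cases h0 : polyphase p c v = 0
    · rw [h0]
      exact dvd_zero _
    · exact (le_rootMultiplicity_iff h0).1 (inf'_le _ (mem_filter.2 ⟨mem_range.2 hc, h0⟩))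
  set T := (range p).filter fun c => ¬ (X - C β) ^ (μ + 1) ∣ polyphase p c v
  have hT_spec : ∀ c ∈ T, polyphase p c v ≠ 0 ∧ rootMultiplicity β (polyphase p c v) = μ := by
    intro c hc
    obtain ⟨hcp, hndvd⟩ := mem_filter.1 hc
    have h0 : polyphase p c v ≠ 0 := fun h => hndvd (h ▸ dvd_zero _)
    refine ⟨h0, le_antisymm ?_ ((le_rootMultiplicity_iff h0).2 (hdvd c (mem_range.1 hcp)))⟩
    by_contra! hlt
    exact hndvd ((le_rootMultiplicity_iff h0).1 hlt)
  have hT : T.Nonempty := by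
    obtain ⟨c, hc, hcμ⟩ := exists_mem_eq_inf' hS fun c => rootMultiplicity β (polyphase p c v)
    obtain ⟨hcp, h0⟩ := mem_filter.1 hc
    refine ⟨c, mem_filter.2 ⟨hcp, fun hd => ?_⟩⟩
    have := (le_rootMultiplicity_iff h0).2 hd
    omega
  have hlo : p * μ ≤ rootMultiplicity α v :=
    (le_rootMultiplicity_iff hv).2 (X_sub_C_pow_dvd_of_dvd_polyphase hp hdvd)
  have hhi := rootMultiplicity_lt_of_dvd_polyphase hp hα hdvd
    (fun c => by simp only [T, β, mem_filter, mem_range]) hT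
  have hTp : #T ≤ p := (card_filter_le _ _).trans (card_range p).le
  have hdiv : rootMultiplicity α v / p = μ :=
    Nat.div_eq_of_lt_le (by rw [mul_comm]; exact hlo) (by rw [add_mul, one_mul, mul_comm]; omega)
  refine ⟨T, filter_subset _ _, ?_, fun c hc => hdiv ▸ hT_spec c hc⟩
  have := Nat.div_add_mod (rootMultiplicity α v) p
  rw [hdiv] at this
  omega

theorem digitWeight_rootMultiplicity_le_card_support (hp : p.Prime) {α : F} (hα : α ≠ 0)
    {v : F[X]} (hv : v ≠ 0) : digitWeight p (rootMultiplicity α v) ≤ #v.support := by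
  induction h : rootMultiplicity α v using Nat.strong_induction_on generalizing v α with
  | _ t ih =>
  rcases Nat.eq_zero_or_pos t with rfl | ht
  · simpa using card_pos.2 (nonempty_support_iff.2 hv)
  obtain ⟨T, hT, hcard, hT_spec⟩ := exists_rootMultiplicity_polyphase_eq_div hp hα hv
  rw [h] at hcard hT_spec
  calc digitWeight p t = (t % p + 1) * digitWeight p (t / p) :=
        digitWeight_eq_mod_add_one_mul hp.one_lt t
    _ ≤ #T * digitWeight p (t / p) := Nat.mul_le_mul_right _ hcard
    _ = ∑ _c ∈ T, digitWeight p (t / p) := by rw [sum_const, smul_eq_mul]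
    _ ≤ ∑ c ∈ T, #(polyphase p c v).support := sum_le_sum fun c hc =>
        ih _ (Nat.div_lt_self ht hp.one_lt) (pow_ne_zero _ hα) (hT_spec c hc).1 (hT_spec c hc).2
    _ ≤ ∑ c ∈ range p, #(polyphase p c v).support := sum_le_sum_of_subset hT
    _ ≤ #v.support := sum_card_support_polyphase_le hp.ne_zero v

lemma card_support_X_add_C_pow_pow_le (hp : p.Prime) (a : F) (j e : ℕ) :
    #(((X + C a) ^ p ^ j) ^ e).support ≤ e + 1 := by
  have : Fact p.Prime := ⟨hp⟩
  have hfrob : (X + C a) ^ p ^ j = expand F (p ^ j) (X + C (a ^ p ^ j)) := by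
    rw [add_pow_char_pow, map_add, expand_X, expand_C, C_pow]
  rw [hfrob, ← map_pow, card_support_expand (pow_ne_zero _ hp.ne_zero)]
  exact (card_supp_le_succ_natDegree _).trans (by rw [natDegree_pow_X_add_C])

lemma card_support_X_pow_add_C_pow_le (hp : p.Prime) {n : ℕ} (hn : n ≠ 0) (γ : F)
    {τ k m : ℕ} :
    #((X ^ n + C γ) ^ (τ * p ^ m + (p ^ k - 1) * p ^ (m + 1))).support ≤ (τ + 1) * p ^ k := by
  have hexpand : (X ^ n + C γ : F[X]) = expand F n (X + C γ) := by
    rw [map_add, expand_X, expand_C]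
  rw [hexpand, ← map_pow, card_support_expand hn, pow_add, mul_comm τ, mul_comm (p ^ k - 1),
    pow_mul, pow_mul]
  calc _ ≤ (τ + 1) * (p ^ k - 1 + 1) := card_support_mul_le.trans
        (Nat.mul_le_mul (card_support_X_add_C_pow_pow_le hp γ m τ)
          (card_support_X_add_C_pow_pow_le hp γ (m + 1) (p ^ k - 1)))
    _ = (τ + 1) * p ^ k := by rw [Nat.sub_add_cancel (Nat.one_le_pow _ _ hp.pos)]

lemma mul_pow_le_card_support_of_dvd (hp : p.Prime) {n : ℕ} (hn : n ≠ 0) {γ : F} (hγ : γ ≠ 0)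
    {c k m i : ℕ} (hi : (p ^ k - 1) * p ^ (m + 1) + c * p ^ m < i) {f : F[X]} (hf : f ≠ 0)
    (hdeg : f.natDegree < n * p ^ (k + m + 1)) (hdvd : (X ^ n + C γ) ^ i ∣ f) :
    (c + 2) * p ^ k ≤ #f.support := by
  classical
  obtain ⟨r, hr, hr0⟩ := exists_polyphase_ne_zero hn hf
  have hg_dvd : (X - C (-γ)) ^ i ∣ polyphase n r f := by
    obtain ⟨h, rfl⟩ := hdvd
    have hexpand : (X ^ n + C γ : F[X]) = expand F n (X - C (-γ)) := by
      rw [map_neg, sub_neg_eq_add, map_add, expand_X, expand_C]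
    rw [hexpand, ← map_pow, polyphase_expand_mul hr]
    exact dvd_mul_right _ _
  set g := polyphase n r f
  have hmult_deg : rootMultiplicity (-γ) g ≤ g.natDegree :=
    (count_roots g).symm.trans_le ((Multiset.count_le_card _ _).trans (card_roots' g))
  have hg_deg : g.natDegree < p ^ (k + m + 1) :=
    Nat.lt_of_mul_lt_mul_left ((mul_natDegree_polyphase_le hn f).trans_lt hdeg)
  calc (c + 2) * p ^ k ≤ digitWeight p (rootMultiplicity (-γ) g) :=
        mul_pow_le_digitWeight hp.one_lt
          (hi.trans_le ((le_rootMultiplicity_iff hr0).2 hg_dvd)) (hmult_deg.trans_lt hg_deg)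
    _ ≤ #g.support := digitWeight_rootMultiplicity_le_card_support hp (neg_ne_zero.2 hγ) hr0
    _ ≤ ∑ r ∈ range n, #(polyphase n r f).support :=
        single_le_sum (f := fun r => #(polyphase n r f).support) (fun _ _ => Nat.zero_le _)
          (mem_range.2 hr)
    _ ≤ #f.support := sum_card_support_polyphase_le hn f

end CharP

end Polynomial

theorem stmt_17_general (p s n : ℕ) (hp : p.Prime) (hs : 1 ≤ s) (hn : 1 ≤ n)
    (F : Type*) [Field F] [CharP F p]
    (γ : F) (hγ : γ ≠ 0)
    (k τ i : ℕ) (hk2 : k ≤ s - 1) (hτ1 : 1 ≤ τ) (hτ2 : τ ≤ p - 1)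
    (hi1 : p ^ s - p ^ (s - k) + (τ - 1) * p ^ (s - k - 1) + 1 ≤ i)
    (hi2 : i ≤ p ^ s - p ^ (s - k) + τ * p ^ (s - k - 1)) :
    sInf {w : ℕ | ∃ f : F[X], f ≠ 0 ∧ f.natDegree < n * p ^ s ∧
        Ideal.Quotient.mk (Ideal.span {((X : F[X]) ^ n + C γ) ^ p ^ s}) f ∈
          Ideal.span {Ideal.Quotient.mk (Ideal.span {((X : F[X]) ^ n + C γ) ^ p ^ s})
            (((X : F[X]) ^ n + C γ) ^ i)} ∧
        w = f.support.card} = (τ + 1) * p ^ k := by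
  obtain ⟨m, rfl⟩ : ∃ m, s = k + m + 1 := ⟨s - k - 1, by omega⟩
  obtain ⟨c, rfl⟩ : ∃ c, τ = c + 1 := ⟨τ - 1, by omega⟩
  have hsub : p ^ (k + m + 1) - p ^ (k + m + 1 - k) = (p ^ k - 1) * p ^ (m + 1) := by
    rw [show k + m + 1 - k = m + 1 by omega, Nat.sub_mul, one_mul, ← pow_add, add_assoc]
  rw [hsub, show k + m + 1 - k - 1 = m by omega] at hi1 hi2
  rw [Nat.add_sub_cancel] at hi1
  set P : F[X] := X ^ n + C γ
  set I := (c + 1) * p ^ m + (p ^ k - 1) * p ^ (m + 1)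
  have hI : I < p ^ (k + m + 1) := Nat.mul_pow_add_mul_pow_succ_lt (by omega)
  have hmem (f : F[X]) := Ideal.Quotient.mk_mem_span_singleton_mk_iff (f := f)
    (pow_dvd_pow P (show i ≤ p ^ (k + m + 1) by omega))
  have hlower (f : F[X]) (hf : f ≠ 0) (hdeg : f.natDegree < n * p ^ (k + m + 1))
      (hdvd : P ^ i ∣ f) : (c + 1 + 1) * p ^ k ≤ #f.support :=
    mul_pow_le_card_support_of_dvd hp (by omega) hγ (by omega) hf hdeg hdvd
  have hP0 : P ^ I ≠ 0 := pow_ne_zero _ (X_pow_add_C_ne_zero (by omega) γ)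
  have hPdeg : (P ^ I).natDegree < n * p ^ (k + m + 1) := by
    rw [natDegree_pow, natDegree_X_pow_add_C, mul_comm]
    exact Nat.mul_lt_mul_of_pos_left hI (by omega)
  have hPdvd : P ^ i ∣ P ^ I := pow_dvd_pow _ (by omega)
  refine IsLeast.csInf_eq ⟨⟨P ^ I, hP0, hPdeg, (hmem _).2 hPdvd, le_antisymm
    (hlower _ hP0 hPdeg hPdvd) (card_support_X_pow_add_C_pow_le hp (by omega) γ)⟩, ?_⟩
  rintro w ⟨f, hf, hdeg, hf_mem, rfl⟩
  exact hlower f hf hdeg ((hmem f).1 hf_mem)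

theorem stmt_17 (p s n : ℕ) (hp : p.Prime) (hs : 1 ≤ s) (hn : 1 ≤ n)
    (F : Type*) [Field F] [Fintype F] [CharP F p]
    (γ : F) (hγ : γ ≠ 0) (hirr : Irreducible ((X : F[X]) ^ n + C γ))
    (k τ i : ℕ) (hk1 : 1 ≤ k) (hk2 : k ≤ s - 1) (hτ1 : 1 ≤ τ) (hτ2 : τ ≤ p - 1)
    (hi1 : p ^ s - p ^ (s - k) + (τ - 1) * p ^ (s - k - 1) + 1 ≤ i)
    (hi2 : i ≤ p ^ s - p ^ (s - k) + τ * p ^ (s - k - 1)) :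
    sInf {w : ℕ | ∃ f : F[X], f ≠ 0 ∧ f.natDegree < n * p ^ s ∧
        Ideal.Quotient.mk (Ideal.span {((X : F[X]) ^ n + C γ) ^ p ^ s}) f ∈
          Ideal.span {Ideal.Quotient.mk (Ideal.span {((X : F[X]) ^ n + C γ) ^ p ^ s})
            (((X : F[X]) ^ n + C γ) ^ i)} ∧
        w = f.support.card} = (τ + 1) * p ^ k :=
  stmt_17_general p s n hp hs hn F γ hγ k τ i hk2 hτ1 hτ2 hi1 hi2
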